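/- The full Gatheral–Schied closed-form value function Γ*(τ, X, S) = κ X² coth(τκ) + (λ X S / κ) tanh(τκ/2) − (λ² S² e^{σ²τ} / (4κ²)) ∫₀^τ tanh(uκ/2)² e^{−σ²u} du satisfies the risk-averse reduced HJB equation ∂Γ/∂τ = (1/2)σ²S² ∂²Γ/∂S² + κ²X² + λSX − (1/4)(∂Γ/∂X)² for all τ > 0, X ∈ ℝ, S ∈ ℝ. -/

import Mathlib

/-!
`Γ*` is a quadratic polynomial in `X` and in `S`, so `∂Γ/∂X` and `∂²Γ/∂S²` are read off from its
coefficients. In `τ`, the risk term `R(τ) = e^{σ²τ} ∫₀^τ tanh(uκ/2)² e^{−σ²u} du` satisfies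
`R' = σ² R + tanh(τκ/2)²`; its `σ² R` part is exactly the diffusion term `½σ²S² ∂²Γ/∂S²`, and
together with `coth' = 1 − coth²` and `tanh' = 1 − tanh²` the equation reduces to the half-angle
identity `coth(2x) tanh x = (1 + tanh² x) / 2`.
-/

/-- The full Gatheral–Schied closed-form value function
`Γ*(τ, X, S) = κ X² coth(τκ) + (λ X S / κ) tanh(τκ/2)
  − (λ² S² e^{σ²τ} / (4κ²)) ∫₀^τ tanh(uκ/2)² e^{−σ²u} du`. -/
noncomputable def GammaStar (σ κ lam : ℝ) (τ X S : ℝ) : ℝ :=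
  κ * X ^ 2 * (Real.cosh (τ * κ) / Real.sinh (τ * κ))
    + (lam * X * S / κ) * Real.tanh (τ * κ / 2)
    - (lam ^ 2 * S ^ 2 * Real.exp (σ ^ 2 * τ) / (4 * κ ^ 2))
        * ∫ u in (0:ℝ)..τ, Real.tanh (u * κ / 2) ^ 2 * Real.exp (-(σ ^ 2) * u)

open Real

namespace Real

theorem hasDerivAt_tanh (x : ℝ) : HasDerivAt tanh (1 - tanh x ^ 2) x := by
  have h := (hasDerivAt_sinh x).div (hasDerivAt_cosh x) (cosh_pos x).ne'
  rw [show sinh / cosh = tanh from funext fun y => (tanh_eq_sinh_div_cosh y).symm] at h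
  refine h.congr_deriv ?_
  rw [tanh_eq_sinh_div_cosh]
  field_simp

@[fun_prop]
theorem continuous_tanh : Continuous tanh :=
  continuous_iff_continuousAt.mpr fun x => (hasDerivAt_tanh x).continuousAt

theorem hasDerivAt_cosh_div_sinh {x : ℝ} (hx : x ≠ 0) :
    HasDerivAt (fun y => cosh y / sinh y) (1 - (cosh x / sinh x) ^ 2) x := by
  refine ((hasDerivAt_cosh x).div (hasDerivAt_sinh x) (sinh_ne_zero.mpr hx)).congr_deriv ?_
  field_simp [sinh_ne_zero.mpr hx]

theorem cosh_two_mul_div_sinh_two_mul_mul_tanh {x : ℝ} (hx : x ≠ 0) :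
    cosh (2 * x) / sinh (2 * x) * tanh x = (1 + tanh x ^ 2) / 2 := by
  have hs : sinh x ≠ 0 := sinh_ne_zero.mpr hx
  have hc : cosh x ≠ 0 := (cosh_pos x).ne'
  rw [cosh_two_mul, sinh_two_mul, tanh_eq_sinh_div_cosh]
  field_simp

end Real

theorem hasDerivAt_exp_mul_integral_exp_neg_mul {g : ℝ → ℝ} (hg : Continuous g) (a t : ℝ) :
    HasDerivAt (fun s => exp (a * s) * ∫ u in (0 : ℝ)..s, g u * exp (-a * u))
      (a * (exp (a * t) * ∫ u in (0 : ℝ)..t, g u * exp (-a * u)) + g t) t := by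
  have hcont : Continuous fun u => g u * exp (-a * u) := by fun_prop
  have hcancel : exp (a * t) * exp (-a * t) = 1 := by rw [← exp_add]; simp
  refine (((hasDerivAt_const_mul a).exp).mul
    (hcont.integral_hasStrictDerivAt 0 t).hasDerivAt).congr_deriv ?_
  linear_combination g t * hcancel

theorem hasDerivAt_quadratic (a b c x : ℝ) :
    HasDerivAt (fun y => a * y ^ 2 + b * y + c) (2 * a * x + b) x := by
  refine ((((hasDerivAt_pow 2 x).const_mul a).fun_add
    ((hasDerivAt_id' x).const_mul b)).add_const c).congr_deriv ?_
  ring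

noncomputable def gammaStarRisk (σ κ τ : ℝ) : ℝ :=
  exp (σ ^ 2 * τ) * ∫ u in (0 : ℝ)..τ, tanh (u * κ / 2) ^ 2 * exp (-(σ ^ 2) * u)

theorem hasDerivAt_gammaStarRisk (σ κ τ : ℝ) :
    HasDerivAt (gammaStarRisk σ κ) (σ ^ 2 * gammaStarRisk σ κ τ + tanh (τ * κ / 2) ^ 2) τ :=
  hasDerivAt_exp_mul_integral_exp_neg_mul (g := fun u => tanh (u * κ / 2) ^ 2)
    (by fun_prop) (σ ^ 2) τ

theorem gammaStar_eq (σ κ lam τ X S : ℝ) :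
    GammaStar σ κ lam τ X S = κ * (cosh (τ * κ) / sinh (τ * κ)) * X ^ 2
      + lam * tanh (τ * κ / 2) / κ * X * S
      - lam ^ 2 / (4 * κ ^ 2) * gammaStarRisk σ κ τ * S ^ 2 := by
  rw [GammaStar, gammaStarRisk]
  ring

theorem hasDerivAt_gammaStar_X (σ κ lam τ X S : ℝ) :
    HasDerivAt (fun x => GammaStar σ κ lam τ x S)
      (2 * κ * (cosh (τ * κ) / sinh (τ * κ)) * X + lam * tanh (τ * κ / 2) / κ * S) X := by
  have h := hasDerivAt_quadratic (κ * (cosh (τ * κ) / sinh (τ * κ)))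
    (lam * tanh (τ * κ / 2) / κ * S) (-(lam ^ 2 / (4 * κ ^ 2) * gammaStarRisk σ κ τ * S ^ 2)) X
  refine (h.congr_deriv (by ring)).congr_of_eventuallyEq (.of_forall fun x => ?_)
  simp only [gammaStar_eq]
  ring

theorem hasDerivAt_gammaStar_S (σ κ lam τ X S : ℝ) :
    HasDerivAt (fun s => GammaStar σ κ lam τ X s)
      (lam * tanh (τ * κ / 2) / κ * X - lam ^ 2 / (2 * κ ^ 2) * gammaStarRisk σ κ τ * S) S := by
  have h := hasDerivAt_quadratic (-(lam ^ 2 / (4 * κ ^ 2) * gammaStarRisk σ κ τ))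
    (lam * tanh (τ * κ / 2) / κ * X) (κ * (cosh (τ * κ) / sinh (τ * κ)) * X ^ 2) S
  refine (h.congr_deriv (by ring)).congr_of_eventuallyEq (.of_forall fun s => ?_)
  simp only [gammaStar_eq]
  ring

theorem deriv_deriv_gammaStar_S (σ κ lam τ X S : ℝ) :
    deriv (fun s => deriv (fun s' => GammaStar σ κ lam τ X s') s) S
      = -(lam ^ 2 / (2 * κ ^ 2) * gammaStarRisk σ κ τ) := by
  simp only [fun s => (hasDerivAt_gammaStar_S σ κ lam τ X s).deriv]
  exact ((hasDerivAt_id' S).const_mul _).const_sub _ |>.deriv.trans (by ring)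

theorem hasDerivAt_gammaStar_tau (σ lam X S : ℝ) {κ τ : ℝ} (hτκ : τ * κ ≠ 0) :
    HasDerivAt (fun s => GammaStar σ κ lam s X S)
      (κ ^ 2 * X ^ 2 * (1 - (cosh (τ * κ) / sinh (τ * κ)) ^ 2)
        + lam * X * S / 2 * (1 - tanh (τ * κ / 2) ^ 2)
        - lam ^ 2 / (4 * κ ^ 2) * (σ ^ 2 * gammaStarRisk σ κ τ + tanh (τ * κ / 2) ^ 2) * S ^ 2)
      τ := by
  have hκ : κ ≠ 0 := right_ne_zero_of_mul hτκ
  simp only [gammaStar_eq]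
  have hcoth := (hasDerivAt_cosh_div_sinh hτκ).comp τ (hasDerivAt_mul_const κ)
  have htanh := (hasDerivAt_tanh (τ * κ / 2)).comp τ ((hasDerivAt_mul_const κ).div_const 2)
  refine (((hcoth.const_mul κ).mul_const (X ^ 2)).fun_add
    (((htanh.const_mul lam).div_const κ).mul_const X |>.mul_const S) |>.fun_sub
    (((hasDerivAt_gammaStarRisk σ κ τ).const_mul (lam ^ 2 / (4 * κ ^ 2))).mul_const (S ^ 2)))
    |>.congr_deriv ?_
  field_simp

theorem gammaStar_solves_HJB_general (σ κ lam : ℝ) (hκ : 0 < κ)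
    (τ X S : ℝ) (hτ : 0 < τ) :
    deriv (fun s : ℝ => GammaStar σ κ lam s X S) τ
      = (1 / 2) * σ ^ 2 * S ^ 2
          * deriv (fun s : ℝ => deriv (fun s' : ℝ => GammaStar σ κ lam τ X s') s) S
        + κ ^ 2 * X ^ 2 + lam * S * X
        - (1 / 4) * (deriv (fun x : ℝ => GammaStar σ κ lam τ x S) X) ^ 2 := by
  have hτκ : τ * κ ≠ 0 := (mul_pos hτ hκ).ne'
  have hcoth_tanh := cosh_two_mul_div_sinh_two_mul_mul_tanh (x := τ * κ / 2) (by positivity)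
  rw [show 2 * (τ * κ / 2) = τ * κ by ring] at hcoth_tanh
  rw [(hasDerivAt_gammaStar_tau σ lam X S hτκ).deriv, deriv_deriv_gammaStar_S,
    (hasDerivAt_gammaStar_X σ κ lam τ X S).deriv]
  -- opaque `C` and `T` stop `field_simp` from clearing the `sinh` denominator
  generalize cosh (τ * κ) / sinh (τ * κ) = C at *
  generalize tanh (τ * κ / 2) = T at *
  field_simp
  linear_combination 16 * κ ^ 2 * lam * S * X * hcoth_tanh

/-- `Γ*` satisfies the risk-averse reduced HJB equation
`∂Γ/∂τ = (1/2)σ²S² ∂²Γ/∂S² + κ²X² + λSX − (1/4)(∂Γ/∂X)²`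
for all `τ > 0`, `X ∈ ℝ`, `S ∈ ℝ`. -/
theorem gammaStar_solves_HJB (σ κ lam : ℝ) (hσ : 0 < σ) (hκ : 0 < κ) (hlam : 0 ≤ lam)
    (τ X S : ℝ) (hτ : 0 < τ) :
    deriv (fun s : ℝ => GammaStar σ κ lam s X S) τ
      = (1 / 2) * σ ^ 2 * S ^ 2
          * deriv (fun s : ℝ => deriv (fun s' : ℝ => GammaStar σ κ lam τ X s') s) S
        + κ ^ 2 * X ^ 2 + lam * S * X
        - (1 / 4) * (deriv (fun x : ℝ => GammaStar σ κ lam τ x S) X) ^ 2 :=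
  gammaStar_solves_HJB_general σ κ lam hκ τ X S hτ
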